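/- Let S' = {s'_1, …, s'_m} be a multiset of nonpositive integers summing to κW' (so W' ≤ 0), and consider κ+1 agents with identical additive valuations over chores, where in each of two rounds the arriving chore set contains chores of values s'_1, …, s'_m together with one chore of value 2W', and the allocation must be repetitive. Then S' can be partitioned into κ subsets each summing to W' if and only if there exists a repetitive allocation whose cumulative allocation is EF1 for chores after both round 1 and round 2. -/

import Mathlib

/-!
Let `c₀` be the chore of value `2W'` and `k` the agent receiving it. After round two agent `k`
may drop one copy of a chore `c` of its bundle `B`, and `2 v(B) - w c ≥ v(B)` because all values
are nonpositive; so EF1 forces every bundle value to be at most `v(B) / 2 ≤ w c₀ / 2 = W'`, while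
`v(B) ≤ 2W'`. The values add up to `κW' + 2W'`, so all these bounds are equalities: agent `k`
holds `c₀` and chores of value `0` only, and the other `κ` agents partition `S'` into parts of sum
`W'`. Conversely such a partition, with `c₀` given to an extra agent, is EF1 after both rounds.
-/

open Finset

/-- Value of the chores of one round: the `j`-th chore is worth `s' j ≤ 0` for
`j < m`, and the last chore is worth `2W'`. -/
def wval' (m : ℕ) (s' : Fin m → ℤ) (W' : ℤ) (j : Fin (m + 1)) : ℝ :=
  if h : j.val < m then (s' ⟨j.val, h⟩ : ℝ) else 2 * (W' : ℝ)

section Bundles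

variable {α ι : Type*} [Fintype α] [DecidableEq ι]

def bundleVal (A : α → ι) (w : α → ℝ) (i : ι) : ℝ :=
  ∑ o ∈ univ.filter (fun o => A o = i), w o

def IsEF1 (A : α → ι) (w : α → ℝ) : Prop :=
  ∀ i j, univ.filter (fun o => A o = i) = ∅ ∨
    ∃ c ∈ univ.filter (fun o => A o = i), bundleVal A w i - w c ≥ bundleVal A w j

/-- EF1 of the cumulative allocation after two rounds of the repetitive allocation `A`: every
bundle is held twice, and one copy of one chore may be removed. -/
def IsEF1Doubled (A : α → ι) (w : α → ℝ) : Prop :=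
  ∀ i j, univ.filter (fun o => A o = i) = ∅ ∨
    ∃ c ∈ univ.filter (fun o => A o = i), 2 * bundleVal A w i - w c ≥ 2 * bundleVal A w j

variable {A : α → ι} {w : α → ℝ}

lemma bundleVal_nonpos (hw : ∀ o, w o ≤ 0) (i : ι) : bundleVal A w i ≤ 0 :=
  sum_nonpos fun o _ => hw o

lemma bundleVal_le_of_mem (hw : ∀ o, w o ≤ 0) {c : α} {i : ι}
    (hc : c ∈ univ.filter (fun o => A o = i)) : bundleVal A w i ≤ w c := by
  simpa [bundleVal] using single_le_sum (f := fun o => -w o) (fun o _ => neg_nonneg.2 (hw o)) hc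

lemma sum_bundleVal [Fintype ι] (A : α → ι) (w : α → ℝ) : ∑ i, bundleVal A w i = ∑ o, w o :=
  sum_fiberwise univ A w

lemma IsEF1Doubled.two_mul_bundleVal_le (hw : ∀ o, w o ≤ 0) (h : IsEF1Doubled A w) (c₀ : α)
    (j : ι) : 2 * bundleVal A w j ≤ bundleVal A w (A c₀) := by
  rcases h (A c₀) j with hempty | ⟨c, hc, hef1⟩
  · simp only [eq_empty_iff_forall_notMem, mem_filter, mem_univ, true_and] at hempty
    exact absurd rfl (hempty c₀)
  · linarith [bundleVal_le_of_mem hw hc]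

lemma sum_ite_two_mul_eq_card_add_one_mul [Fintype ι] (k : ι) (M : ℝ) :
    ∑ i, (if i = k then 2 * M else M) = (Fintype.card ι + 1) * M := by
  have hcard : 1 ≤ Fintype.card ι := Fintype.card_pos_iff.2 ⟨k⟩
  simp [sum_ite, filter_ne', filter_eq']
  push_cast [hcard]
  ring

lemma IsEF1Doubled.bundleVal_eq [Fintype ι] (hw : ∀ o, w o ≤ 0) (h : IsEF1Doubled A w)
    {c₀ : α} {M : ℝ} (hc₀ : w c₀ = 2 * M) (htot : ∑ o, w o = (Fintype.card ι + 1) * M)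
    (i : ι) : bundleVal A w i = if i = A c₀ then 2 * M else M := by
  have hk : bundleVal A w (A c₀) ≤ 2 * M := hc₀ ▸ bundleVal_le_of_mem hw (by simp)
  have hle : ∀ i ∈ (univ : Finset ι), bundleVal A w i ≤ if i = A c₀ then 2 * M else M := by
    intro i _
    split_ifs with hi
    · exact hi ▸ hk
    · linarith [h.two_mul_bundleVal_le hw c₀ i]
  refine (sum_eq_sum_iff_of_le hle).1 ?_ i (mem_univ i)
  rw [sum_bundleVal, htot, sum_ite_two_mul_eq_card_add_one_mul]

section Profile

variable {c₀ : α} {M : ℝ}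

lemma bundleVal_le_of_bundleVal_eq (hw : ∀ o, w o ≤ 0) (hc₀ : w c₀ = 2 * M)
    (hv : ∀ i, bundleVal A w i = if i = A c₀ then 2 * M else M) (j : ι) :
    bundleVal A w j ≤ M := by
  have : M ≤ 0 := by linarith [hw c₀]
  rw [hv j]
  split_ifs <;> linarith

lemma isEF1_of_bundleVal_eq (hw : ∀ o, w o ≤ 0) (hc₀ : w c₀ = 2 * M)
    (hv : ∀ i, bundleVal A w i = if i = A c₀ then 2 * M else M) : IsEF1 A w := by
  intro i j
  have hj := bundleVal_le_of_bundleVal_eq hw hc₀ hv j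
  by_cases hi : i = A c₀
  · refine Or.inr ⟨c₀, by simp [hi], ?_⟩
    rw [hv i, if_pos hi, hc₀]
    linarith [bundleVal_nonpos (A := A) hw j]
  · rcases eq_empty_or_nonempty (univ.filter (fun o => A o = i)) with hempty | ⟨c, hc⟩
    · exact Or.inl hempty
    · exact Or.inr ⟨c, hc, by rw [hv i, if_neg hi]; linarith [hw c]⟩

lemma isEF1Doubled_of_bundleVal_eq (hw : ∀ o, w o ≤ 0) (hc₀ : w c₀ = 2 * M)
    (hv : ∀ i, bundleVal A w i = if i = A c₀ then 2 * M else M) : IsEF1Doubled A w := by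
  intro i j
  have hj := bundleVal_le_of_bundleVal_eq hw hc₀ hv j
  by_cases hi : i = A c₀
  · exact Or.inr ⟨c₀, by simp [hi], by rw [hv i, if_pos hi, hc₀]; linarith⟩
  · rcases eq_empty_or_nonempty (univ.filter (fun o => A o = i)) with hempty | ⟨c, hc⟩
    · exact Or.inl hempty
    · exact Or.inr ⟨c, hc, by rw [hv i, if_neg hi]; linarith [hw c]⟩

end Profile

end Bundles

lemma Finset.sum_filter_getD_eq {α β M : Type*} [DecidableEq β] [AddCommMonoid M]
    (s : Finset α) {f : α → Option β} {w : α → M} (hw : ∀ o, f o = none → w o = 0) (b₀ b : β) :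
    ∑ o ∈ s.filter (fun o => (f o).getD b₀ = b), w o =
      ∑ o ∈ s.filter (fun o => f o = some b), w o := by
  symm
  refine sum_subset (fun o ho => ?_) (fun o ho hno => ?_)
  · simp only [mem_filter] at ho ⊢
    simp [ho.2, ho.1]
  · simp only [mem_filter] at ho hno
    cases hfo : f o with
    | none => exact hw o hfo
    | some b' => simp_all

section Chores

variable {m : ℕ} {s' : Fin m → ℤ} {W' : ℤ}

@[simp]
lemma wval'_castSucc (j : Fin m) : wval' m s' W' j.castSucc = s' j := by
  simp [wval']

@[simp]
lemma wval'_last : wval' m s' W' (Fin.last m) = 2 * W' := by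
  simp [wval']

lemma wval'_nonpos (hs' : ∀ j, s' j ≤ 0) (hW' : W' ≤ 0) (o : Fin (m + 1)) :
    wval' m s' W' o ≤ 0 := by
  induction o using Fin.lastCases with
  | last => simp only [wval'_last]; exact_mod_cast (by omega : 2 * W' ≤ 0)
  | cast j => simp only [wval'_castSucc]; exact_mod_cast hs' j

lemma sum_wval' : ∑ o, wval' m s' W' o = ∑ j, (s' j : ℝ) + 2 * W' := by
  simp [Fin.sum_univ_castSucc]

lemma bundleVal_wval' {ι : Type*} [DecidableEq ι] (A : Fin (m + 1) → ι) (i : ι) :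
    bundleVal A (wval' m s' W') i =
      ∑ j ∈ univ.filter (fun j => A j.castSucc = i), (s' j : ℝ) +
        if A (Fin.last m) = i then 2 * (W' : ℝ) else 0 := by
  simp [bundleVal, sum_filter, Fin.sum_univ_castSucc]

variable {κ : ℕ}

def extendPartition (P : Fin m → Fin κ) : Fin (m + 1) → Fin (κ + 1) :=
  Fin.snoc (α := fun _ => Fin (κ + 1)) (fun j => (P j).castSucc) (Fin.last κ)

lemma bundleVal_extendPartition {P : Fin m → Fin κ}
    (hP : ∀ a, ∑ j ∈ univ.filter (fun j => P j = a), s' j = W') (i : Fin (κ + 1)) :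
    bundleVal (extendPartition P) (wval' m s' W') i =
      if i = extendPartition P (Fin.last m) then 2 * (W' : ℝ) else W' := by
  rw [bundleVal_wval']
  induction i using Fin.lastCases with
  | last => simp [extendPartition, Fin.castSucc_ne_last]
  | cast a =>
    simp only [extendPartition, Fin.snoc_castSucc, Fin.snoc_last, Fin.castSucc_inj,
      (Fin.castSucc_lt_last a).ne, (Fin.castSucc_lt_last a).ne', if_false, add_zero]
    exact_mod_cast hP a

lemma exists_partition_of_bundleVal_eq (hκ : 0 < κ) (hs' : ∀ j, s' j ≤ 0)
    (A : Fin (m + 1) → Fin (κ + 1))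
    (hv : ∀ i, bundleVal A (wval' m s' W') i = if i = A (Fin.last m) then 2 * (W' : ℝ) else W') :
    ∃ P : Fin m → Fin κ, ∀ a, ∑ j ∈ univ.filter (fun j => P j = a), s' j = W' := by
  set k := A (Fin.last m)
  have hzero : ∀ j, A j.castSucc = k → s' j = 0 := by
    have hk := hv k
    rw [bundleVal_wval', if_pos rfl, if_pos rfl, add_eq_right] at hk
    have hk' : ∑ j ∈ univ.filter (fun j => A j.castSucc = k), s' j = 0 := by exact_mod_cast hk
    intro j hj
    exact (sum_eq_zero_iff_of_nonpos fun j _ => hs' j).1 hk' j (by simp [hj])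
  have hclass : ∀ a, ∑ j ∈ univ.filter (fun j => A j.castSucc = k.succAbove a), s' j = W' := by
    intro a
    have ha := hv (k.succAbove a)
    rw [bundleVal_wval', if_neg (Fin.succAbove_ne k a).symm, if_neg (Fin.succAbove_ne k a),
      add_zero] at ha
    exact_mod_cast ha
  refine ⟨fun j => (finSuccEquiv' k (A j.castSucc)).getD ⟨0, hκ⟩, fun a => ?_⟩
  rw [sum_filter_getD_eq _ (fun j hj => hzero j (finSuccEquiv'_eq_none.1 hj).symm)]
  simpa using hclass a

end Chores

/-- Identical valuations, κ+1 agents, the same m+1 chores arriving in each of two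
rounds, repetitive allocation: `S'` can be partitioned into κ subsets each summing
to `W'` iff there is a repetitive allocation whose cumulative allocation is EF1 for
chores after round 1 and after round 2. -/
theorem stmt16 (κ m : ℕ) (hκ : 0 < κ) (s' : Fin m → ℤ) (hs' : ∀ j, s' j ≤ 0)
    (W' : ℤ) (hsum : ∑ j : Fin m, s' j = κ * W') :
    (∃ P : Fin m → Fin κ, ∀ a : Fin κ,
        ∑ j ∈ Finset.univ.filter (fun j => P j = a), s' j = W') ↔
    (∃ A : Fin (m + 1) → Fin (κ + 1),
      -- EF1 for chores after round 1
      (∀ i j : Fin (κ + 1), Finset.univ.filter (fun o => A o = i) = ∅ ∨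
        ∃ c ∈ Finset.univ.filter (fun o => A o = i),
          (∑ o ∈ Finset.univ.filter (fun o => A o = i), wval' m s' W' o) - wval' m s' W' c ≥
            ∑ o ∈ Finset.univ.filter (fun o => A o = j), wval' m s' W' o) ∧
      -- EF1 for chores after round 2 (each chore appears twice; one copy removable)
      (∀ i j : Fin (κ + 1), Finset.univ.filter (fun o => A o = i) = ∅ ∨
        ∃ c ∈ Finset.univ.filter (fun o => A o = i),
          2 * (∑ o ∈ Finset.univ.filter (fun o => A o = i), wval' m s' W' o) - wval' m s' W' c ≥
            2 * ∑ o ∈ Finset.univ.filter (fun o => A o = j), wval' m s' W' o)) := by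
  have hW' : W' ≤ 0 :=
    nonpos_of_mul_nonpos_right (hsum ▸ sum_nonpos fun j _ => hs' j) (by exact_mod_cast hκ)
  have hw := wval'_nonpos hs' hW'
  constructor
  · rintro ⟨P, hP⟩
    have hv := bundleVal_extendPartition hP
    exact ⟨extendPartition P, isEF1_of_bundleVal_eq hw wval'_last hv,
      isEF1Doubled_of_bundleVal_eq hw wval'_last hv⟩
  · rintro ⟨A, -, hA⟩
    refine exists_partition_of_bundleVal_eq hκ hs' A (IsEF1Doubled.bundleVal_eq hw hA wval'_last ?_)
    have hsumℝ : ∑ j, (s' j : ℝ) = κ * W' := by exact_mod_cast hsum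
    rw [sum_wval', hsumℝ, Fintype.card_fin]
    push_cast
    ring
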